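/- arXiv:2111.11678 — 4 statements merged into one kernel-verified Lean document; each statement's English description precedes it below -/
import Mathlib

section
/- Let δ, γ, κ, C₀ > 0, let d ≥ 1 be an integer, and let w_a, w_b be real numbers with w_a, w_b ≥ 1. Let p, q be positive integers with p ≤ w_a^{d−1} and q ≤ w_b^{d−1}. Let λ_a, λ_b be real numbers, let μ : Fin p → ℝ and ν : Fin q → ℝ be families of positive real numbers satisfying |μ_j − λ_a| ≤ C₀/(1+ln w_a)^δ for all j and |ν_l − λ_b| ≤ C₀/(1+ln w_b)^δ for all l. Let t be a real number such that |t − λ_a + λ_b| ≥ γ(1 + |w_a − w_b|) and |t − μ_j + ν_l| ≥ κ(1 + |w_a − w_b|) for all j ∈ Fin p, l ∈ Fin q. Let A be a p × q complex matrix and define the p × q complex matrix B by B_{jl} = A_{jl}/(t − μ_j + ν_l). Then ‖B‖ ≤ exp(C_{δ,d} γ^{−1/δ}) · ‖A‖ / (κ(1 + |w_a − w_b|)), where C_{δ,d} = ((d−1)/2)·(2C₀)^{1/δ} and ‖·‖ denotes the operator norm of a matrix as a linear map between the Euclidean spaces ℂ^q → ℂ^p. -/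
/-!
If all the denominators `t - μ j + ν l` have the same sign, write
`1 / x = ∫₀^∞ exp (-s x) ds`: then `B = ∫₀^∞ D_s A E_s ds` with diagonal matrices `D_s`, `E_s` whose
norms multiply to at most `exp (-s κ (1 + |w_a - w_b|))`, so `‖B‖ ≤ ‖A‖ / (κ (1 + |w_a - w_b|))`.
Otherwise `t - λ_a + λ_b` lies within `ε_a + ε_b` of a positive and of a negative number, where
`ε_a`, `ε_b` are the two spreads `C₀ / (1 + log w)^δ`, so the gap condition forces
`γ ≤ 2 C₀ / (1 + log w)^δ` for the `w` with the larger spread. This bounds `log w` by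
`(2 C₀ / γ)^(1/δ)`, hence the matching dimension by `√p` or `√q ≤ exp (C_{δ,d} γ^(-1/δ))`, and the
entrywise bound on `B` is turned into an operator bound through the Frobenius norm.
-/

open scoped Matrix.Norms.L2Operator
open MeasureTheory Set Real Matrix

/-- The operator norm of a complex `p × q` matrix viewed as a linear map
between the Euclidean spaces `ℂ^q → ℂ^p`. -/
noncomputable def matrixOpNorm {p q : ℕ} (A : Matrix (Fin p) (Fin q) ℂ) : ℝ :=
  ‖LinearMap.toContinuousLinearMap (Matrix.toEuclideanLin A)‖

theorem integral_exp_neg_mul_Ioi_zero {c : ℝ} (hc : 0 < c) :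
    ∫ s in Ioi (0 : ℝ), exp (-c * s) = c⁻¹ := by
  rw [integral_exp_mul_Ioi (neg_lt_zero.2 hc)]
  simp

theorem abs_sub_add_le_of_exists_nonneg_of_exists_nonpos {ι ι' : Type*} {μ : ι → ℝ} {ν : ι' → ℝ}
    {t a b εa εb : ℝ} (hμ : ∀ j, |μ j - a| ≤ εa) (hν : ∀ l, |ν l - b| ≤ εb)
    (hnonneg : ∃ j l, 0 ≤ t - μ j + ν l) (hnonpos : ∃ j l, t - μ j + ν l ≤ 0) :
    |t - a + b| ≤ εa + εb := by
  obtain ⟨j₁, l₁, h₁⟩ := hnonneg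
  obtain ⟨j₂, l₂, h₂⟩ := hnonpos
  have h₁μ := abs_le.1 (hμ j₁)
  have h₁ν := abs_le.1 (hν l₁)
  have h₂μ := abs_le.1 (hμ j₂)
  have h₂ν := abs_le.1 (hν l₂)
  exact abs_le.2 ⟨by linarith, by linarith⟩

theorem log_le_rpow_mul_rpow_of_le_div_rpow {δ γ C w : ℝ} (hδ : 0 < δ) (hγ : 0 < γ) (hw : 1 ≤ w)
    (h : γ ≤ C / (1 + log w) ^ δ) : log w ≤ C ^ (1 / δ) * γ ^ (-(1 / δ)) := by
  have hL : 0 < 1 + log w := by linarith [log_nonneg hw]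
  have hLδ : (1 + log w) ^ δ ≤ C / γ := by
    rw [le_div_iff₀ (rpow_pos_of_pos hL δ)] at h
    rwa [le_div_iff₀ hγ, mul_comm]
  have hC : 0 ≤ C := by
    have := (rpow_pos_of_pos hL δ).trans_le hLδ
    exact (div_pos_iff_of_pos_right hγ).1 this |>.le
  calc log w ≤ 1 + log w := by linarith
    _ = ((1 + log w) ^ δ) ^ (1 / δ) := by rw [← rpow_mul hL.le, mul_one_div_cancel hδ.ne', rpow_one]
    _ ≤ (C / γ) ^ (1 / δ) := by gcongr
    _ = C ^ (1 / δ) * γ ^ (-(1 / δ)) := by rw [div_rpow hC hγ.le, rpow_neg hγ.le, div_eq_mul_inv]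

theorem sqrt_le_exp_of_le_pow {n d : ℕ} {w K : ℝ} (hd : 1 ≤ d) (hw : 0 < w)
    (hn : (n : ℝ) ≤ w ^ (d - 1)) (hK : log w ≤ K) : √n ≤ exp (((d : ℝ) - 1) / 2 * K) := by
  have hd' : (0 : ℝ) ≤ ((d : ℝ) - 1) / 2 := by
    have : (1 : ℝ) ≤ d := by exact_mod_cast hd
    linarith
  calc √n ≤ √(w ^ (d - 1)) := sqrt_le_sqrt hn
    _ = exp (((d : ℝ) - 1) / 2 * log w) := by
        rw [sqrt_eq_rpow, rpow_def_of_pos (by positivity), log_pow, Nat.cast_sub hd, Nat.cast_one]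
        ring_nf
    _ ≤ exp (((d : ℝ) - 1) / 2 * K) := by gcongr

theorem sqrt_le_exp_of_le_div_rpow {n d : ℕ} {δ γ C w : ℝ} (hδ : 0 < δ) (hγ : 0 < γ)
    (hd : 1 ≤ d) (hw : 1 ≤ w) (hn : (n : ℝ) ≤ w ^ (d - 1)) (h : γ ≤ C / (1 + log w) ^ δ) :
    √n ≤ exp (((d : ℝ) - 1) / 2 * C ^ (1 / δ) * γ ^ (-(1 / δ))) := by
  rw [mul_assoc]
  exact sqrt_le_exp_of_le_pow hd (by linarith) hn (log_le_rpow_mul_rpow_of_le_div_rpow hδ hγ hw h)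

theorem Matrix.l2_opNorm_diagonal_exp_le {ι : Type*} [Fintype ι] [DecidableEq ι] {w : ι → ℝ}
    {c s : ℝ} (hs : 0 ≤ s) (hw : ∀ i, c ≤ w i) :
    ‖(diagonal fun i => (exp (-s * w i) : ℂ))‖ ≤ exp (-s * c) := by
  rw [l2_opNorm_diagonal]
  refine (pi_norm_le_iff_of_nonneg (exp_pos _).le).2 fun i => ?_
  rw [Complex.norm_real, norm_of_nonneg (exp_pos _).le]
  exact exp_le_exp.2 (by nlinarith [hw i])

section Frobenius

variable {𝕜 m n : Type*} [RCLike 𝕜] [Fintype m] [Fintype n] [DecidableEq n]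

theorem Matrix.l2_opNorm_le_sqrt_sum_norm_sq (A : Matrix m n 𝕜) :
    ‖A‖ ≤ √(∑ i, ∑ j, ‖A i j‖ ^ 2) := by
  refine ContinuousLinearMap.opNorm_le_bound _ (sqrt_nonneg _) fun x => ?_
  rw [← sqrt_sq (norm_nonneg x), ← sqrt_mul (by positivity)]
  refine le_sqrt_of_sq_le ?_
  rw [EuclideanSpace.norm_sq_eq, EuclideanSpace.norm_sq_eq, Finset.sum_mul]
  refine Finset.sum_le_sum fun i _ => ?_
  calc ‖(A *ᵥ x) i‖ ^ 2 ≤ (∑ j, ‖A i j‖ * ‖x j‖) ^ 2 := by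
        gcongr
        exact (norm_sum_le _ _).trans_eq (by simp only [norm_mul])
    _ ≤ _ := Finset.sum_mul_sq_le_sq_mul_sq _ _ _

theorem Matrix.sum_norm_sq_le_l2_opNorm_sq (A : Matrix m n 𝕜) (j : n) :
    ∑ i, ‖A i j‖ ^ 2 ≤ ‖A‖ ^ 2 := by
  have h := A.l2_opNorm_mulVec (EuclideanSpace.single j 1)
  rw [PiLp.norm_single, norm_one, mul_one] at h
  calc ∑ i, ‖A i j‖ ^ 2
      = ‖(EuclideanSpace.equiv m 𝕜).symm (A *ᵥ EuclideanSpace.single j 1)‖ ^ 2 := by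
        rw [EuclideanSpace.norm_sq_eq]
        simp
    _ ≤ ‖A‖ ^ 2 := by gcongr

theorem Matrix.sum_sum_norm_sq_le_card_mul_l2_opNorm_sq (A : Matrix m n 𝕜) :
    ∑ i, ∑ j, ‖A i j‖ ^ 2 ≤ Fintype.card n * ‖A‖ ^ 2 := by
  rw [Finset.sum_comm, ← nsmul_eq_mul, ← Finset.card_univ]
  exact Finset.sum_le_card_nsmul _ _ _ fun j _ => A.sum_norm_sq_le_l2_opNorm_sq j

theorem Matrix.l2_opNorm_le_sqrt_card_mul_of_norm_le {c : ℝ} (hc : 0 ≤ c) {A B : Matrix m n 𝕜}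
    (h : ∀ i j, ‖B i j‖ ≤ c * ‖A i j‖) : ‖B‖ ≤ √(Fintype.card n) * c * ‖A‖ := by
  refine B.l2_opNorm_le_sqrt_sum_norm_sq.trans (sqrt_le_iff.2 ⟨by positivity, ?_⟩)
  calc ∑ i, ∑ j, ‖B i j‖ ^ 2 ≤ ∑ i, ∑ j, c ^ 2 * ‖A i j‖ ^ 2 := by
        gcongr with i _ j _
        rw [← mul_pow]
        exact pow_le_pow_left₀ (norm_nonneg _) (h i j) 2
    _ ≤ c ^ 2 * (Fintype.card n * ‖A‖ ^ 2) := by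
        simp_rw [← Finset.mul_sum]
        gcongr
        exact A.sum_sum_norm_sq_le_card_mul_l2_opNorm_sq
    _ = (√(Fintype.card n) * c * ‖A‖) ^ 2 := by
        rw [mul_pow, mul_pow, sq_sqrt (Nat.cast_nonneg _)]
        ring

theorem Matrix.l2_opNorm_le_sqrt_card_mul_of_norm_le' [DecidableEq m] {c : ℝ} (hc : 0 ≤ c)
    {A B : Matrix m n 𝕜} (h : ∀ i j, ‖B i j‖ ≤ c * ‖A i j‖) :
    ‖B‖ ≤ √(Fintype.card m) * c * ‖A‖ := by
  rw [← l2_opNorm_conjTranspose B, ← l2_opNorm_conjTranspose A]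
  exact l2_opNorm_le_sqrt_card_mul_of_norm_le hc fun j i => by simpa using h i j

theorem Matrix.l2_opNorm_le_mul_div_of_apply_eq_div [DecidableEq m] {x : m → n → ℝ} {c E : ℝ}
    (hc : 0 < c) (hx : ∀ i j, c ≤ |x i j|) (hE : √(Fintype.card m) ≤ E ∨ √(Fintype.card n) ≤ E)
    {A B : Matrix m n 𝕜} (hB : ∀ i j, B i j = A i j / (x i j : 𝕜)) : ‖B‖ ≤ E * ‖A‖ / c := by
  have hBA : ∀ i j, ‖B i j‖ ≤ c⁻¹ * ‖A i j‖ := fun i j => by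
    rw [hB, norm_div, RCLike.norm_ofReal, div_eq_inv_mul]
    gcongr
    exact hx i j
  rw [mul_div_right_comm, div_eq_mul_inv E]
  rcases hE with hE | hE
  · exact (l2_opNorm_le_sqrt_card_mul_of_norm_le' (by positivity) hBA).trans (by gcongr)
  · exact (l2_opNorm_le_sqrt_card_mul_of_norm_le (by positivity) hBA).trans (by gcongr)

end Frobenius

section CauchyMultiplier

variable {m n : Type*} [Fintype m] [Fintype n] [DecidableEq m] [DecidableEq n]

theorem Matrix.l2_opNorm_le_of_apply_eq_div_add {u : m → ℝ} {v : n → ℝ} {a b : ℝ}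
    (hab : 0 < a + b) (hu : ∀ i, a ≤ u i) (hv : ∀ j, b ≤ v j) {A B : Matrix m n ℂ}
    (hB : ∀ i j, B i j = A i j / ((u i + v j : ℝ) : ℂ)) : ‖B‖ ≤ ‖A‖ / (a + b) := by
  have hpos : ∀ i j, 0 < u i + v j := fun i j => hab.trans_le (add_le_add (hu i) (hv j))
  set F : ℝ → Matrix m n ℂ := fun s =>
    diagonal (fun i => (exp (-s * u i) : ℂ)) * A * diagonal (fun j => (exp (-s * v j) : ℂ))
  have hF : F = fun s => ∑ i, ∑ j, exp (-(u i + v j) * s) • single i j (A i j) := by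
    funext s
    ext i j
    simp only [F, mul_diagonal, diagonal_mul, smul_single, Matrix.sum_apply, single_apply, ite_and,
      Finset.sum_ite_irrel, Finset.sum_ite_eq', Finset.mem_univ, if_true, Finset.sum_const_zero,
      Complex.real_smul]
    push_cast
    rw [mul_right_comm, ← Complex.exp_add]
    ring_nf
  have hint : ∀ i j,
      IntegrableOn (fun s => exp (-(u i + v j) * s) • single i j (A i j)) (Ioi 0) :=
    fun i j => (exp_neg_integrableOn_Ioi 0 (hpos i j)).smul_const _
  have hFB : ∫ s in Ioi 0, F s = B := by
    rw [hF, integral_finsetSum _ fun i _ => integrable_finsetSum _ fun j _ => hint i j]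
    simp_rw [integral_finsetSum _ fun j _ => hint _ j, integral_smul_const,
      integral_exp_neg_mul_Ioi_zero (hpos _ _)]
    ext i j
    simp [Matrix.sum_apply, single_apply, ite_and, hB, div_eq_inv_mul]
  have hFle : ∀ s, 0 ≤ s → ‖F s‖ ≤ exp (-(a + b) * s) * ‖A‖ := by
    intro s hs
    calc ‖F s‖ ≤ ‖diagonal (fun i => (exp (-s * u i) : ℂ))‖ * ‖A‖ *
          ‖diagonal (fun j => (exp (-s * v j) : ℂ))‖ :=
          (l2_opNorm_mul _ _).trans (mul_le_mul_of_nonneg_right (l2_opNorm_mul _ _) (norm_nonneg _))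
      _ ≤ exp (-s * a) * ‖A‖ * exp (-s * b) := by
          gcongr
          · exact l2_opNorm_diagonal_exp_le hs hu
          · exact l2_opNorm_diagonal_exp_le hs hv
      _ = exp (-(a + b) * s) * ‖A‖ := by
          rw [show -(a + b) * s = -s * a + -s * b by ring, exp_add]
          ring
  calc ‖B‖ = ‖∫ s in Ioi 0, F s‖ := by rw [hFB]
    _ ≤ ∫ s in Ioi 0, exp (-(a + b) * s) * ‖A‖ :=
        norm_integral_le_of_norm_le ((exp_neg_integrableOn_Ioi 0 hab).mul_const _)
          ((ae_restrict_mem measurableSet_Ioi).mono fun s hs => hFle s (le_of_lt hs))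
    _ = ‖A‖ / (a + b) := by
        rw [integral_mul_const, integral_exp_neg_mul_Ioi_zero hab, inv_mul_eq_div]

theorem Matrix.l2_opNorm_le_of_apply_eq_div_add_of_le {u : m → ℝ} {v : n → ℝ} {c : ℝ}
    (hc : 0 < c) (huv : ∀ i j, c ≤ u i + v j) {A B : Matrix m n ℂ}
    (hB : ∀ i j, B i j = A i j / ((u i + v j : ℝ) : ℂ)) : ‖B‖ ≤ ‖A‖ / c := by
  cases isEmpty_or_nonempty m
  · rw [Subsingleton.elim B 0, norm_zero]
    positivity
  obtain ⟨i₀, -, hi₀⟩ := Finset.exists_min_image Finset.univ u Finset.univ_nonempty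
  have := l2_opNorm_le_of_apply_eq_div_add (a := u i₀) (b := c - u i₀) (by linarith)
    (fun i => hi₀ i (Finset.mem_univ i)) (fun j => by linarith [huv i₀ j]) hB
  rwa [add_sub_cancel] at this

theorem Matrix.l2_opNorm_le_of_apply_eq_div_add_of_le_abs {u : m → ℝ} {v : n → ℝ} {c : ℝ}
    (hc : 0 < c) (huv : ∀ i j, c ≤ |u i + v j|)
    (hsign : (∀ i j, 0 < u i + v j) ∨ ∀ i j, u i + v j < 0) {A B : Matrix m n ℂ}
    (hB : ∀ i j, B i j = A i j / ((u i + v j : ℝ) : ℂ)) : ‖B‖ ≤ ‖A‖ / c := by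
  rcases hsign with hpos | hneg
  · exact l2_opNorm_le_of_apply_eq_div_add_of_le hc (fun i j => abs_of_pos (hpos i j) ▸ huv i j) hB
  · rw [← norm_neg A]
    refine l2_opNorm_le_of_apply_eq_div_add_of_le (u := -u) (v := -v) hc (fun i j => ?_)
      fun i j => ?_
    · simp only [Pi.neg_apply]
      linarith [abs_of_neg (hneg i j) ▸ huv i j]
    · rw [hB, neg_apply, ← neg_div_neg_eq, ← Complex.ofReal_neg]
      simp only [Pi.neg_apply, neg_add]

end CauchyMultiplier

theorem stmt0_general (δ γ κ C₀ : ℝ) (hδ : 0 < δ) (hγ : 0 < γ) (hκ : 0 < κ) (hC₀ : 0 < C₀)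
    (d : ℕ) (hd : 1 ≤ d) (wa wb : ℝ) (hwa : 1 ≤ wa) (hwb : 1 ≤ wb)
    (p q : ℕ)
    (hpw : (p : ℝ) ≤ wa ^ (d - 1)) (hqw : (q : ℝ) ≤ wb ^ (d - 1))
    (lamA lamB : ℝ) (μ : Fin p → ℝ) (ν : Fin q → ℝ)
    (hμ : ∀ j, |μ j - lamA| ≤ C₀ / (1 + Real.log wa) ^ δ)
    (hν : ∀ l, |ν l - lamB| ≤ C₀ / (1 + Real.log wb) ^ δ)
    (t : ℝ)
    (ht1 : γ * (1 + |wa - wb|) ≤ |t - lamA + lamB|)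
    (ht2 : ∀ j l, κ * (1 + |wa - wb|) ≤ |t - μ j + ν l|)
    (A B : Matrix (Fin p) (Fin q) ℂ)
    (hB : ∀ j l, B j l = A j l / ((t - μ j + ν l : ℝ) : ℂ)) :
    matrixOpNorm B ≤
      Real.exp (((d : ℝ) - 1) / 2 * (2 * C₀) ^ (1 / δ) * γ ^ (-(1 / δ))) * matrixOpNorm A /
        (κ * (1 + |wa - wb|)) := by
  set m := κ * (1 + |wa - wb|)
  set K := ((d : ℝ) - 1) / 2 * (2 * C₀) ^ (1 / δ) * γ ^ (-(1 / δ))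
  have hm : 0 < m := by positivity
  change ‖B‖ ≤ exp K * ‖A‖ / m
  by_cases hsign : (∀ j l, 0 < t - μ j + ν l) ∨ ∀ j l, t - μ j + ν l < 0
  · have hK : 0 ≤ K := by
      have : (1 : ℝ) ≤ d := by exact_mod_cast hd
      positivity
    calc ‖B‖ ≤ ‖A‖ / m :=
          l2_opNorm_le_of_apply_eq_div_add_of_le_abs (u := fun j => t - μ j) hm ht2 hsign hB
      _ ≤ exp K * ‖A‖ / m := by
          gcongr
          exact le_mul_of_one_le_left (norm_nonneg A) (one_le_exp hK)
  push Not at hsign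
  obtain ⟨hnonpos, hnonneg⟩ := hsign
  have hgap : γ * (1 + |wa - wb|) ≤ C₀ / (1 + log wa) ^ δ + C₀ / (1 + log wb) ^ δ :=
    ht1.trans (abs_sub_add_le_of_exists_nonneg_of_exists_nonpos hμ hν hnonneg hnonpos)
  have hγle : γ ≤ γ * (1 + |wa - wb|) := le_mul_of_one_le_right hγ.le (by simp)
  refine l2_opNorm_le_mul_div_of_apply_eq_div hm ht2 ?_ hB
  rcases le_total (C₀ / (1 + log wb) ^ δ) (C₀ / (1 + log wa) ^ δ) with hab | hab
  · left
    rw [Fintype.card_fin]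
    exact sqrt_le_exp_of_le_div_rpow (C := 2 * C₀) hδ hγ hd hwa hpw
      (by rw [mul_div_assoc]; linarith)
  · right
    rw [Fintype.card_fin]
    exact sqrt_le_exp_of_le_div_rpow (C := 2 * C₀) hδ hγ hd hwb hqw
      (by rw [mul_div_assoc]; linarith)

theorem stmt0 (δ γ κ C₀ : ℝ) (hδ : 0 < δ) (hγ : 0 < γ) (hκ : 0 < κ) (hC₀ : 0 < C₀)
    (d : ℕ) (hd : 1 ≤ d) (wa wb : ℝ) (hwa : 1 ≤ wa) (hwb : 1 ≤ wb)
    (p q : ℕ) (hp : 0 < p) (hq : 0 < q)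
    (hpw : (p : ℝ) ≤ wa ^ (d - 1)) (hqw : (q : ℝ) ≤ wb ^ (d - 1))
    (lamA lamB : ℝ) (μ : Fin p → ℝ) (ν : Fin q → ℝ)
    (hμpos : ∀ j, 0 < μ j) (hνpos : ∀ l, 0 < ν l)
    (hμ : ∀ j, |μ j - lamA| ≤ C₀ / (1 + Real.log wa) ^ δ)
    (hν : ∀ l, |ν l - lamB| ≤ C₀ / (1 + Real.log wb) ^ δ)
    (t : ℝ)
    (ht1 : γ * (1 + |wa - wb|) ≤ |t - lamA + lamB|)
    (ht2 : ∀ j l, κ * (1 + |wa - wb|) ≤ |t - μ j + ν l|)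
    (A B : Matrix (Fin p) (Fin q) ℂ)
    (hB : ∀ j l, B j l = A j l / ((t - μ j + ν l : ℝ) : ℂ)) :
    matrixOpNorm B ≤
      Real.exp (((d : ℝ) - 1) / 2 * (2 * C₀) ^ (1 / δ) * γ ^ (-(1 / δ))) * matrixOpNorm A /
        (κ * (1 + |wa - wb|)) :=
  stmt0_general δ γ κ C₀ hδ hγ hκ hC₀ d hd wa wb hwa hwb p q hpw hqw lamA lamB μ ν hμ hν t ht1 ht2 A
    B hB
end

section
/- Let d ≥ 1 be an integer, let ι ≥ 0, C₁, C₂ > 0, and set p = 2(d+2)/(d+1). Let V : ℝ^d → ℝ be a measurable function satisfying |V(x)| ≤ C₁(1 + ln(1+|x|²))^{−2ι} for all x ∈ ℝ^d. Let w_a, w_b ≥ 1 be real numbers and let Ψ_a, Ψ_b ∈ L²(ℝ^d) be functions with ‖Ψ_a‖_{L²} = ‖Ψ_b‖_{L²} = 1 which satisfy the L^p bounds ‖Ψ_a‖_{L^p(ℝ^d)} ≤ C₂ · w_a^{−(1/2)(1/2 − 1/p)} and ‖Ψ_b‖_{L^p(ℝ^d)} ≤ C₂ · w_b^{−(1/2)(1/2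 − 1/p)}. Then there exists a constant C > 0 depending only on d, ι, C₁, C₂ such that |∫_{ℝ^d} V(x) Ψ_a(x) Ψ_b(x) dx| ≤ C / ((1 + ln w_a)^ι (1 + ln w_b)^ι). -/
open MeasureTheory
open scoped ENNReal NNReal



private lemma aux_log_le {w ε : ℝ} (hw : 1 ≤ w) (hε0 : 0 < ε) (hε1 : ε ≤ 1) :
    1 + Real.log w ≤ ε⁻¹ * w ^ ε := by
  have hw0 : 0 < w := lt_of_lt_of_le one_pos hw
  have h1 : Real.log (w ^ ε) ≤ w ^ ε - 1 :=
    Real.log_le_sub_one_of_pos (Real.rpow_pos_of_pos hw0 _)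
  rw [Real.log_rpow hw0] at h1
  have h2 : 0 ≤ Real.log w := Real.log_nonneg hw
  rw [inv_mul_eq_div, le_div_iff₀ hε0]
  nlinarith [Real.rpow_pos_of_pos hw0 ε]

private lemma aux_pow {w β ι : ℝ} (hw : 1 ≤ w) (hβ0 : 0 < β) (hβ1 : β ≤ 1) (hι : 0 ≤ ι) :
    w ^ (-β) * (1 + Real.log w) ^ ι ≤ (β / (ι + 1)) ^ (-ι) := by
  have hw0 : 0 < w := lt_of_lt_of_le one_pos hw
  set ε := β / (ι + 1) with hε
  have hε0 : 0 < ε := div_pos hβ0 (by linarith)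
  have hε1 : ε ≤ 1 := by
    rw [hε, div_le_one (by linarith)]; linarith
  have h2 : 0 ≤ Real.log w := Real.log_nonneg hw
  have h1 : (1 + Real.log w) ^ ι ≤ (ε⁻¹ * w ^ ε) ^ ι :=
    Real.rpow_le_rpow (by linarith) (aux_log_le hw hε0 hε1) hι
  have h3 : (ε⁻¹ * w ^ ε) ^ ι = ε⁻¹ ^ ι * w ^ (ε * ι) := by
    rw [Real.mul_rpow (by positivity) (by positivity), ← Real.rpow_mul hw0.le]
  have h4 : w ^ (ε * ι) ≤ w ^ β := by
    apply Real.rpow_le_rpow_of_exponent_le hw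
    rw [hε]
    rw [div_mul_eq_mul_div, div_le_iff₀ (by linarith : (0:ℝ) < ι + 1)]
    nlinarith
  have h5 : ε⁻¹ ^ ι = ε ^ (-ι) := by rw [← Real.rpow_neg_one, ← Real.rpow_mul hε0.le]; ring_nf
  calc w ^ (-β) * (1 + Real.log w) ^ ι
      ≤ w ^ (-β) * (ε⁻¹ ^ ι * w ^ (ε * ι)) := by
        apply mul_le_mul_of_nonneg_left (h1.trans h3.le) (by positivity)
    _ ≤ w ^ (-β) * (ε⁻¹ ^ ι * w ^ β) := by
        apply mul_le_mul_of_nonneg_left (mul_le_mul_of_nonneg_left h4 (by positivity)) (by positivity)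
    _ = ε⁻¹ ^ ι * (w ^ (-β) * w ^ β) := by ring
    _ = ε⁻¹ ^ ι := by rw [← Real.rpow_add hw0]; simp
    _ = ε ^ (-ι) := h5


private lemma aux_term2 {d : ℕ} (hd : 1 ≤ d) {ι wa wb : ℝ} (hι : 0 ≤ ι)
    (hwa : 1 ≤ wa) (hwb : 1 ≤ wb) :
    (1 + Real.log (1 + ((wa * wb) ^ ((8 * (d:ℝ))⁻¹)) ^ 2)) ^ (-(2*ι)) *
      ((1 + Real.log wa) ^ ι * (1 + Real.log wb) ^ ι) ≤ (4 * (d:ℝ)) ^ (2*ι) := by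
  have hd1 : (1:ℝ) ≤ (d:ℝ) := by exact_mod_cast hd
  have hwab : (1:ℝ) ≤ wa * wb := one_le_mul_of_one_le_of_one_le hwa hwb
  have hwab0 : (0:ℝ) < wa * wb := by linarith
  set La := Real.log wa with hLa
  set Lb := Real.log wb with hLb
  have hLa0 : 0 ≤ La := Real.log_nonneg hwa
  have hLb0 : 0 ≤ Lb := Real.log_nonneg hwb
  set R := (wa * wb) ^ ((8 * (d:ℝ))⁻¹) with hR
  have hR1 : 1 ≤ R := Real.one_le_rpow hwab (by positivity)
  have hR0 : 0 < R := by linarith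
  -- log (1 + R^2) ≥ (La + Lb)/(4d)
  have hlogR : Real.log R = (8 * (d:ℝ))⁻¹ * (La + Lb) := by
    rw [hR, Real.log_rpow hwab0, Real.log_mul (by linarith) (by linarith)]
  have h1 : Real.log (R ^ 2) ≤ Real.log (1 + R ^ 2) :=
    Real.log_le_log (by positivity) (by nlinarith)
  have h2 : Real.log (R ^ 2) = 2 * Real.log R := by
    rw [Real.log_pow]; push_cast; ring
  have h2' : Real.log (R ^ 2) = (La + Lb) / (4 * (d:ℝ)) := by
    rw [h2, hlogR]
    field_simp
    ring
  have hA : (1 + La + Lb) / (4 * (d:ℝ)) ≤ 1 + Real.log (1 + R ^ 2) := by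
    have h7 : (La + Lb) / (4 * (d:ℝ)) ≤ Real.log (1 + R ^ 2) := h2' ▸ h1
    have h8 : (1 + La + Lb) / (4 * (d:ℝ)) ≤ 1 + (La + Lb) / (4 * (d:ℝ)) := by
      rw [div_le_iff₀ (by positivity), add_mul, div_mul_cancel₀ _ (by positivity : (4:ℝ) * d ≠ 0)]
      nlinarith
    linarith
  have hB0 : 0 < (1 + La + Lb) / (4 * (d:ℝ)) := by positivity
  have h3 : (1 + Real.log (1 + R ^ 2)) ^ (-(2*ι)) ≤
      ((1 + La + Lb) / (4 * (d:ℝ))) ^ (-(2*ι)) :=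
    Real.rpow_le_rpow_of_nonpos hB0 hA (by linarith)
  have h4 : ((1 + La + Lb) / (4 * (d:ℝ))) ^ (-(2*ι)) =
      (4 * (d:ℝ)) ^ (2*ι) * (1 + La + Lb) ^ (-(2*ι)) := by
    rw [div_eq_mul_inv, Real.mul_rpow (by linarith) (by positivity),
      ← Real.rpow_neg_one (4 * (d:ℝ)), ← Real.rpow_mul (by positivity)]
    ring_nf
  have h5 : (1 + La) ^ ι * (1 + Lb) ^ ι ≤ (1 + La + Lb) ^ (2*ι) := by
    rw [← Real.mul_rpow (by linarith) (by linarith)]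
    calc ((1 + La) * (1 + Lb)) ^ ι ≤ ((1 + La + Lb) ^ 2) ^ ι :=
          Real.rpow_le_rpow (by nlinarith) (by nlinarith) hι
      _ = (1 + La + Lb) ^ (2*ι) := by
          rw [← Real.rpow_natCast (1 + La + Lb) 2, ← Real.rpow_mul (by linarith)]
          norm_num
  have h6 : (1 + La + Lb) ^ (-(2*ι)) * (1 + La + Lb) ^ (2*ι) = 1 := by
    rw [← Real.rpow_add (by linarith)]; simp
  calc (1 + Real.log (1 + R ^ 2)) ^ (-(2*ι)) * ((1 + La) ^ ι * (1 + Lb) ^ ι)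
      ≤ ((4 * (d:ℝ)) ^ (2*ι) * (1 + La + Lb) ^ (-(2*ι))) * (1 + La + Lb) ^ (2*ι) := by
        apply mul_le_mul (h3.trans_eq h4) h5 (by positivity) (by positivity)
    _ = (4 * (d:ℝ)) ^ (2*ι) * ((1 + La + Lb) ^ (-(2*ι)) * (1 + La + Lb) ^ (2*ι)) := by ring
    _ = (4 * (d:ℝ)) ^ (2*ι) := by rw [h6, mul_one]


private lemma cs_step {α : Type*} [MeasurableSpace α] {μ : Measure α}
    {f g : α → ℝ≥0∞} (hf : AEMeasurable f μ) (hg : AEMeasurable g μ) :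
    ∫⁻ x, f x * g x ∂μ ≤
      (∫⁻ x, f x ^ (2:ℝ) ∂μ) ^ ((2:ℝ)⁻¹) * (∫⁻ x, g x ^ (2:ℝ) ∂μ) ^ ((2:ℝ)⁻¹) := by
  have h := ENNReal.lintegral_mul_le_Lp_mul_Lq μ
    Real.HolderConjugate.two_two hf hg
  simpa [one_div] using h

private lemma holder_step {α : Type*} [MeasurableSpace α] {μ : Measure α} (d : ℕ)
    {f : α → ℝ≥0∞} (hf : AEMeasurable f μ) {s : Set α} :
    ∫⁻ x in s, f x ^ (2:ℝ) ∂μ ≤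
      (∫⁻ x, f x ^ (2*((d:ℝ)+2)/((d:ℝ)+1)) ∂μ) ^ (((d:ℝ)+1)/((d:ℝ)+2)) *
        (μ s) ^ (((d:ℝ)+2)⁻¹) := by
  have hd1 : (0:ℝ) < (d:ℝ) + 1 := by positivity
  have hd2 : (0:ℝ) < (d:ℝ) + 2 := by positivity
  have hpq : Real.HolderConjugate (((d:ℝ)+2)/((d:ℝ)+1)) ((d:ℝ)+2) := by
    constructor
    · rw [inv_div]; field_simp; ring
    · positivity
    · positivity
  have h := ENNReal.lintegral_mul_le_Lp_mul_Lq (μ.restrict s) hpq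
    ((hf.pow_const (2:ℝ)).restrict) aemeasurable_const (g := fun _ => (1:ℝ≥0∞))
  simp only [Pi.mul_apply, mul_one, ENNReal.one_rpow, lintegral_one,
    Measure.restrict_apply MeasurableSet.univ, Set.univ_inter] at h
  have hrw : ∀ x, (f x ^ (2:ℝ)) ^ (((d:ℝ)+2)/((d:ℝ)+1)) = f x ^ (2*((d:ℝ)+2)/((d:ℝ)+1)) := by
    intro x
    rw [← ENNReal.rpow_mul]
    ring_nf
  simp only [hrw] at h
  rw [one_div_div, one_div] at h
  refine h.trans ?_
  exact mul_le_mul_left (ENNReal.rpow_le_rpow (setLIntegral_le_lintegral s _)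
    (by positivity)) _

private lemma inner_holder {α : Type*} [MeasurableSpace α] {μ : Measure α} (d : ℕ)
    {f g : α → ℝ≥0∞} (hf : AEMeasurable f μ) (hg : AEMeasurable g μ)
    {s : Set α} (h0 : μ s ≠ 0) (ht : μ s ≠ ⊤) :
    ∫⁻ x in s, f x * g x ∂μ ≤
      (∫⁻ x, f x ^ (2*((d:ℝ)+2)/((d:ℝ)+1)) ∂μ) ^ (((d:ℝ)+1)/(2*((d:ℝ)+2))) *
      (∫⁻ x, g x ^ (2*((d:ℝ)+2)/((d:ℝ)+1)) ∂μ) ^ (((d:ℝ)+1)/(2*((d:ℝ)+2))) *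
      (μ s) ^ (((d:ℝ)+2)⁻¹) := by
  have hd2 : (0:ℝ) < (d:ℝ) + 2 := by positivity
  have h2i : (0:ℝ) ≤ 2⁻¹ := by norm_num
  calc ∫⁻ x in s, f x * g x ∂μ
      ≤ (∫⁻ x in s, f x ^ (2:ℝ) ∂μ) ^ ((2:ℝ)⁻¹) * (∫⁻ x in s, g x ^ (2:ℝ) ∂μ) ^ ((2:ℝ)⁻¹) :=
        cs_step hf.restrict hg.restrict
    _ ≤ ((∫⁻ x, f x ^ (2*((d:ℝ)+2)/((d:ℝ)+1)) ∂μ) ^ (((d:ℝ)+1)/((d:ℝ)+2)) *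
          (μ s) ^ (((d:ℝ)+2)⁻¹)) ^ ((2:ℝ)⁻¹) *
        ((∫⁻ x, g x ^ (2*((d:ℝ)+2)/((d:ℝ)+1)) ∂μ) ^ (((d:ℝ)+1)/((d:ℝ)+2)) *
          (μ s) ^ (((d:ℝ)+2)⁻¹)) ^ ((2:ℝ)⁻¹) :=
        mul_le_mul' (ENNReal.rpow_le_rpow (holder_step d hf) h2i)
          (ENNReal.rpow_le_rpow (holder_step d hg) h2i)
    _ = (∫⁻ x, f x ^ (2*((d:ℝ)+2)/((d:ℝ)+1)) ∂μ) ^ (((d:ℝ)+1)/(2*((d:ℝ)+2))) *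
      (∫⁻ x, g x ^ (2*((d:ℝ)+2)/((d:ℝ)+1)) ∂μ) ^ (((d:ℝ)+1)/(2*((d:ℝ)+2))) *
      (μ s) ^ (((d:ℝ)+2)⁻¹) := by
        rw [ENNReal.mul_rpow_of_nonneg _ _ h2i, ENNReal.mul_rpow_of_nonneg _ _ h2i]
        simp only [← ENNReal.rpow_mul]
        have e1 : ((d:ℝ)+1)/((d:ℝ)+2) * (2:ℝ)⁻¹ = ((d:ℝ)+1)/(2*((d:ℝ)+2)) := by
          rw [← div_eq_mul_inv, div_div, mul_comm ((d:ℝ)+2) 2]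
        have e3 : μ s ^ (((d:ℝ)+2)⁻¹ * (2:ℝ)⁻¹) * μ s ^ (((d:ℝ)+2)⁻¹ * (2:ℝ)⁻¹)
            = μ s ^ (((d:ℝ)+2)⁻¹) := by
          rw [← ENNReal.rpow_add _ _ h0 ht]; congr 1; ring
        rw [e1, mul_mul_mul_comm, e3]


set_option maxHeartbeats 1000000 in
theorem stmt1 (d : ℕ) (hd : 1 ≤ d) (ι C₁ C₂ : ℝ) (hι : 0 ≤ ι) (hC₁ : 0 < C₁) (hC₂ : 0 < C₂) :
    ∃ C > 0, ∀ (V : EuclideanSpace ℝ (Fin d) → ℝ) (wa wb : ℝ)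
      (Ψa Ψb : EuclideanSpace ℝ (Fin d) → ℝ),
      Measurable V →
      (∀ x, |V x| ≤ C₁ * (1 + Real.log (1 + ‖x‖ ^ 2)) ^ (-(2 * ι))) →
      1 ≤ wa → 1 ≤ wb →
      MemLp Ψa 2 volume → MemLp Ψb 2 volume →
      eLpNorm Ψa 2 volume = 1 → eLpNorm Ψb 2 volume = 1 →
      eLpNorm Ψa (ENNReal.ofReal (2 * (d + 2) / (d + 1))) volume ≤
        ENNReal.ofReal (C₂ * wa ^ (-(1 / 2 : ℝ) * (1 / 2 - 1 / (2 * (d + 2) / (d + 1))))) →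
      eLpNorm Ψb (ENNReal.ofReal (2 * (d + 2) / (d + 1))) volume ≤
        ENNReal.ofReal (C₂ * wb ^ (-(1 / 2 : ℝ) * (1 / 2 - 1 / (2 * (d + 2) / (d + 1))))) →
      Integrable (fun x => V x * Ψa x * Ψb x) volume ∧
      |∫ x, V x * Ψa x * Ψb x| ≤ C / ((1 + Real.log wa) ^ ι * (1 + Real.log wb) ^ ι) := by
  have hd1 : (1:ℝ) ≤ (d:ℝ) := by exact_mod_cast hd
  have hdne : (d:ℝ) ≠ 0 := by linarith
  haveI : Nonempty (Fin d) := ⟨⟨0, hd⟩⟩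
  set ν := volume (Metric.ball (0:EuclideanSpace ℝ (Fin d)) 1) with hν
  have hν0 : ν ≠ 0 := (Metric.measure_ball_pos volume _ one_pos).ne'
  have hνt : ν ≠ ⊤ := measure_ball_lt_top.ne
  set νr := ν.toReal with hνr
  have hνr0 : 0 < νr := ENNReal.toReal_pos hν0 hνt
  set β : ℝ := (8*((d:ℝ)+2))⁻¹ with hβ
  have hβ0 : 0 < β := by rw [hβ]; positivity
  have hβ1 : β ≤ 1 := by
    rw [hβ, inv_le_one_iff₀]; right; linarith
  set ε : ℝ := β/(ι+1) with hε
  have hε0 : 0 < ε := by rw [hε]; positivity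
  set pr : ℝ := 2 * ((d:ℝ) + 2) / ((d:ℝ) + 1) with hpr
  have hpr0 : 0 < pr := by rw [hpr]; positivity
  set e : ℝ := -(1 / 2 : ℝ) * (1 / 2 - 1 / pr) with he_def
  have he : e = -((4*((d:ℝ)+2))⁻¹) := by
    rw [he_def, hpr, one_div_div]
    field_simp
    ring
  set cd : ℝ := ((d:ℝ)+2)⁻¹ with hcd
  set K1 : ℝ := C₁ * C₂^2 * νr ^ cd with hK1
  have hK10 : 0 < K1 := by
    rw [hK1]
    exact mul_pos (mul_pos hC₁ (pow_pos hC₂ 2)) (Real.rpow_pos_of_pos hνr0 _)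
  refine ⟨K1 * ε ^ (-(2*ι)) + C₁ * (4*(d:ℝ)) ^ (2*ι),
    add_pos (mul_pos hK10 (Real.rpow_pos_of_pos hε0 _))
      (mul_pos hC₁ (Real.rpow_pos_of_pos (by positivity) _)), ?_⟩
  intro V wa wb Ψa Ψb hV hVb hwa hwb hΨa2 hΨb2 hna hnb hpa hpb
  have hwa0 : (0:ℝ) < wa := lt_of_lt_of_le one_pos hwa
  have hwb0 : (0:ℝ) < wb := lt_of_lt_of_le one_pos hwb
  have hwab1 : (1:ℝ) ≤ wa * wb := one_le_mul_of_one_le_of_one_le hwa hwb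
  have hwab0 : (0:ℝ) < wa * wb := by linarith
  set R : ℝ := (wa*wb) ^ ((8*(d:ℝ))⁻¹) with hR
  have hR1 : 1 ≤ R := Real.one_le_rpow hwab1 (by positivity)
  have hR0 : 0 < R := by linarith
  set s : Set (EuclideanSpace ℝ (Fin d)) := Metric.ball 0 R with hs
  have hsm : MeasurableSet s := measurableSet_ball
  have hμs : volume s = ENNReal.ofReal (R ^ d) * ν := by
    rw [hs, hν, Measure.addHaar_ball _ _ hR0.le, finrank_euclideanSpace_fin]
  have hμs0 : volume s ≠ 0 := by
    rw [hμs]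
    exact mul_ne_zero (ENNReal.ofReal_pos.mpr (pow_pos hR0 d)).ne' hν0
  have hμst : volume s ≠ ⊤ := by
    rw [hμs]; exact ENNReal.mul_ne_top ENNReal.ofReal_ne_top hνt
  -- global bound on V
  have hlog1 : ∀ x : EuclideanSpace ℝ (Fin d), (1:ℝ) ≤ 1 + Real.log (1+‖x‖^2) := by
    intro x
    have h := Real.log_nonneg (by nlinarith [sq_nonneg ‖x‖] : (1:ℝ) ≤ 1+‖x‖^2)
    linarith
  have hVC : ∀ x, |V x| ≤ C₁ := fun x => (hVb x).trans (mul_le_of_le_one_right hC₁.le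
    (Real.rpow_le_one_of_one_le_of_nonpos (hlog1 x) (by linarith)))
  -- integrability
  have hab : Integrable (fun x => Ψa x * Ψb x) volume := by
    have h : MemLp (Ψa • Ψb) 1 volume := by
      refine hΨb2.smul hΨa2
    have h2 := memLp_one_iff_integrable.mp h
    simpa [Pi.smul_apply, smul_eq_mul, Pi.mul_def] using h2
  have hInt : Integrable (fun x => V x * Ψa x * Ψb x) volume := by
    have h := hab.bdd_mul hV.aestronglyMeasurable
      (c := C₁) (Filter.Eventually.of_forall fun x => by simpa [Real.norm_eq_abs] using hVC x)
    simpa [mul_assoc] using h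
  refine ⟨hInt, ?_⟩
  set Fa : EuclideanSpace ℝ (Fin d) → ℝ≥0∞ := fun x => (‖Ψa x‖₊ : ℝ≥0∞) with hFa
  set Fb : EuclideanSpace ℝ (Fin d) → ℝ≥0∞ := fun x => (‖Ψb x‖₊ : ℝ≥0∞) with hFb
  have hFam : AEMeasurable Fa volume := hΨa2.1.enorm
  have hFbm : AEMeasurable Fb volume := hΨb2.1.enorm
  -- eLpNorm rewritings
  have hP : (ENNReal.ofReal pr) ≠ 0 := by
    simp [ENNReal.ofReal_eq_zero, not_le, hpr0]
  have hea : eLpNorm Ψa (ENNReal.ofReal pr) volume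
      = (∫⁻ x, Fa x ^ pr) ^ (((d:ℝ)+1)/(2*((d:ℝ)+2))) := by
    rw [eLpNorm_eq_lintegral_rpow_enorm_toReal hP ENNReal.ofReal_ne_top,
      ENNReal.toReal_ofReal hpr0.le, hpr, one_div_div]
    rfl
  have heb : eLpNorm Ψb (ENNReal.ofReal pr) volume
      = (∫⁻ x, Fb x ^ pr) ^ (((d:ℝ)+1)/(2*((d:ℝ)+2))) := by
    rw [eLpNorm_eq_lintegral_rpow_enorm_toReal hP ENNReal.ofReal_ne_top,
      ENNReal.toReal_ofReal hpr0.le, hpr, one_div_div]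
    rfl
  have hea2 : eLpNorm Ψa 2 volume = (∫⁻ x, Fa x ^ (2:ℝ)) ^ ((2:ℝ)⁻¹) := by
    rw [eLpNorm_eq_lintegral_rpow_enorm_toReal two_ne_zero ENNReal.ofNat_ne_top]
    norm_num
    rfl
  have heb2 : eLpNorm Ψb 2 volume = (∫⁻ x, Fb x ^ (2:ℝ)) ^ ((2:ℝ)⁻¹) := by
    rw [eLpNorm_eq_lintegral_rpow_enorm_toReal two_ne_zero ENNReal.ofNat_ne_top]
    norm_num
    rfl
  -- pointwise identity
  have hGeq : ∀ x, (‖V x * Ψa x * Ψb x‖₊ : ℝ≥0∞) = ENNReal.ofReal |V x| * (Fa x * Fb x) := by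
    intro x
    rw [hFa, hFb, ← Real.enorm_eq_ofReal_abs]
    simp [nnnorm_mul, ENNReal.coe_mul, mul_assoc]
    rfl
  -- volume of ball rewriting
  have hvols : (volume s) ^ cd = ENNReal.ofReal ((R^d * νr) ^ cd) := by
    rw [hμs, ← ENNReal.ofReal_toReal hνt, ← hνr, ← ENNReal.ofReal_mul (pow_nonneg hR0.le d),
      ENNReal.ofReal_rpow_of_nonneg (mul_nonneg (pow_nonneg hR0.le d) hνr0.le)
        (by rw [hcd]; positivity)]
  -- inner bound
  set T1 : ℝ := C₁ * (C₂ * wa ^ e * (C₂ * wb ^ e) * (R^d * νr) ^ cd) with hT1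
  have hnn1 : (0:ℝ) ≤ C₂ * wa ^ e := mul_nonneg hC₂.le (Real.rpow_nonneg hwa0.le e)
  have hnn2 : (0:ℝ) ≤ C₂ * wb ^ e := mul_nonneg hC₂.le (Real.rpow_nonneg hwb0.le e)
  have hnn3 : (0:ℝ) ≤ (R^d * νr) ^ cd :=
    Real.rpow_nonneg (mul_nonneg (pow_nonneg hR0.le d) hνr0.le) cd
  have hT1nn : 0 ≤ T1 := by
    rw [hT1]
    exact mul_nonneg hC₁.le (mul_nonneg (mul_nonneg hnn1 hnn2) hnn3)
  have hinner : ∫⁻ x in s, (‖V x * Ψa x * Ψb x‖₊ : ℝ≥0∞) ≤ ENNReal.ofReal T1 := by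
    calc ∫⁻ x in s, (‖V x * Ψa x * Ψb x‖₊ : ℝ≥0∞)
        ≤ ∫⁻ x in s, ENNReal.ofReal C₁ * (Fa x * Fb x) := by
          refine lintegral_mono fun x => ?_
          rw [hGeq x]
          exact mul_le_mul_left (ENNReal.ofReal_le_ofReal (hVC x)) _
      _ = ENNReal.ofReal C₁ * ∫⁻ x in s, Fa x * Fb x :=
          lintegral_const_mul' _ _ ENNReal.ofReal_ne_top
      _ ≤ ENNReal.ofReal C₁ * ((∫⁻ x, Fa x ^ pr) ^ (((d:ℝ)+1)/(2*((d:ℝ)+2))) *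
            (∫⁻ x, Fb x ^ pr) ^ (((d:ℝ)+1)/(2*((d:ℝ)+2))) * (volume s) ^ cd) := by
          refine mul_le_mul_right ?_ _
          have h := inner_holder d hFam hFbm hμs0 hμst
          rw [hpr, hcd]
          exact h
      _ ≤ ENNReal.ofReal C₁ * (ENNReal.ofReal (C₂ * wa ^ e) * ENNReal.ofReal (C₂ * wb ^ e) *
            ENNReal.ofReal ((R^d * νr) ^ cd)) := by
          refine mul_le_mul_right ?_ _
          refine mul_le_mul' (mul_le_mul' ?_ ?_) hvols.le
          · rw [← hea]; exact hpa
          · rw [← heb]; exact hpb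
      _ = ENNReal.ofReal T1 := by
          rw [hT1, ← ENNReal.ofReal_mul hnn1, ← ENNReal.ofReal_mul (mul_nonneg hnn1 hnn2),
            ← ENNReal.ofReal_mul hC₁.le]
  -- outer bound
  set M : ℝ := C₁ * (1 + Real.log (1 + R^2)) ^ (-(2*ι)) with hM
  have hbase : (1:ℝ) ≤ 1 + Real.log (1 + R^2) := by
    have h := Real.log_nonneg (by nlinarith : (1:ℝ) ≤ 1 + R^2)
    linarith
  have hMnn : 0 ≤ M := by
    rw [hM]; exact mul_nonneg hC₁.le (Real.rpow_nonneg (by linarith) _)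
  have houtV : ∀ x ∈ sᶜ, |V x| ≤ M := by
    intro x hx
    have hxR : R ≤ ‖x‖ := by
      rw [hs] at hx
      exact not_lt.mp (fun h => hx (mem_ball_zero_iff.mpr h))
    have h1 : 1 + R^2 ≤ 1 + ‖x‖^2 := by nlinarith
    have h2 : Real.log (1 + R^2) ≤ Real.log (1 + ‖x‖^2) :=
      Real.log_le_log (by nlinarith) h1
    refine (hVb x).trans ?_
    rw [hM]
    exact mul_le_mul_of_nonneg_left
      (Real.rpow_le_rpow_of_nonpos (by linarith) (by linarith) (by linarith)) hC₁.le
  have houter : ∫⁻ x in sᶜ, (‖V x * Ψa x * Ψb x‖₊ : ℝ≥0∞) ≤ ENNReal.ofReal M := by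
    calc ∫⁻ x in sᶜ, (‖V x * Ψa x * Ψb x‖₊ : ℝ≥0∞)
        ≤ ∫⁻ x in sᶜ, ENNReal.ofReal M * (Fa x * Fb x) := by
          refine lintegral_mono_ae ?_
          filter_upwards [ae_restrict_mem hsm.compl] with x hx
          rw [hGeq x]
          exact mul_le_mul_left (ENNReal.ofReal_le_ofReal (houtV x hx)) _
      _ = ENNReal.ofReal M * ∫⁻ x in sᶜ, Fa x * Fb x :=
          lintegral_const_mul' _ _ ENNReal.ofReal_ne_top
      _ ≤ ENNReal.ofReal M * 1 := by
          refine mul_le_mul_right ?_ _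
          calc ∫⁻ x in sᶜ, Fa x * Fb x ≤ ∫⁻ x, Fa x * Fb x := setLIntegral_le_lintegral _ _
            _ ≤ (∫⁻ x, Fa x ^ (2:ℝ)) ^ ((2:ℝ)⁻¹) * (∫⁻ x, Fb x ^ (2:ℝ)) ^ ((2:ℝ)⁻¹) :=
                cs_step hFam hFbm
            _ = eLpNorm Ψa 2 volume * eLpNorm Ψb 2 volume := by rw [hea2, heb2]
            _ = 1 := by rw [hna, hnb, mul_one]
      _ = ENNReal.ofReal M := mul_one _
  -- final real inequality
  have h1a : (0:ℝ) < 1 + Real.log wa := by linarith [Real.log_nonneg hwa]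
  have h1b : (0:ℝ) < 1 + Real.log wb := by linarith [Real.log_nonneg hwb]
  have hD0 : (0:ℝ) < (1 + Real.log wa) ^ ι * (1 + Real.log wb) ^ ι :=
    mul_pos (Real.rpow_pos_of_pos h1a ι) (Real.rpow_pos_of_pos h1b ι)
  have hfinal : T1 + M ≤ (K1 * ε ^ (-(2*ι)) + C₁ * (4*(d:ℝ)) ^ (2*ι)) /
      ((1 + Real.log wa) ^ ι * (1 + Real.log wb) ^ ι) := by
    rw [le_div_iff₀ hD0]
    -- T1 = K1 * (wa^(-β) * wb^(-β))
    have hRd : (R:ℝ)^d = (wa*wb) ^ ((8:ℝ)⁻¹) := by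
      rw [hR, ← Real.rpow_natCast ((wa*wb) ^ ((8*(d:ℝ))⁻¹)) d, ← Real.rpow_mul hwab0.le]
      congr 1
      field_simp
    have hvol : (R^d * νr) ^ cd = wa ^ β * wb ^ β * νr ^ cd := by
      rw [hRd, Real.mul_rpow (by positivity) hνr0.le, ← Real.rpow_mul hwab0.le,
        Real.mul_rpow hwa0.le hwb0.le]
      congr 2 <;> rw [hβ, hcd] <;> field_simp
    have hwaeb : wa ^ e * wa ^ β = wa ^ (-β) := by
      rw [← Real.rpow_add hwa0]
      congr 1
      rw [he, hβ]
      field_simp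
      ring
    have hwbeb : wb ^ e * wb ^ β = wb ^ (-β) := by
      rw [← Real.rpow_add hwb0]
      congr 1
      rw [he, hβ]
      field_simp
      ring
    have hT1eq : T1 = K1 * (wa ^ (-β) * wb ^ (-β)) := by
      rw [hT1, hvol, ← hwaeb, ← hwbeb, hK1]
      ring
    have haux_a := aux_pow hwa hβ0 hβ1 hι
    have haux_b := aux_pow hwb hβ0 hβ1 hι
    have hεpow : (β/(ι+1)) ^ (-ι) * ((β/(ι+1)) ^ (-ι)) = ε ^ (-(2*ι)) := by
      rw [← hε, ← Real.rpow_add hε0]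
      congr 1
      ring
    have hT1D : T1 * ((1 + Real.log wa) ^ ι * (1 + Real.log wb) ^ ι) ≤ K1 * ε ^ (-(2*ι)) := by
      rw [hT1eq, ← hεpow]
      have h1 : wa ^ (-β) * wb ^ (-β) * ((1 + Real.log wa) ^ ι * (1 + Real.log wb) ^ ι)
          = (wa ^ (-β) * (1 + Real.log wa) ^ ι) * (wb ^ (-β) * (1 + Real.log wb) ^ ι) := by
        ring
      rw [mul_assoc, h1]
      refine mul_le_mul_of_nonneg_left ?_ hK10.le
      refine mul_le_mul haux_a haux_b
        (mul_nonneg (Real.rpow_nonneg hwb0.le _) (Real.rpow_nonneg (by linarith) _))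
        (Real.rpow_nonneg (div_nonneg hβ0.le (by linarith)) _)
    have haux2 := aux_term2 hd hι hwa hwb
    rw [← hR] at haux2
    have hMD : M * ((1 + Real.log wa) ^ ι * (1 + Real.log wb) ^ ι)
        ≤ C₁ * (4*(d:ℝ)) ^ (2*ι) := by
      rw [hM, mul_assoc]
      exact mul_le_mul_of_nonneg_left haux2 hC₁.le
    calc (T1 + M) * ((1 + Real.log wa) ^ ι * (1 + Real.log wb) ^ ι)
        = T1 * ((1 + Real.log wa) ^ ι * (1 + Real.log wb) ^ ι) +
          M * ((1 + Real.log wa) ^ ι * (1 + Real.log wb) ^ ι) := by ring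
      _ ≤ K1 * ε ^ (-(2*ι)) + C₁ * (4*(d:ℝ)) ^ (2*ι) := add_le_add hT1D hMD
  -- conclusion
  have habs : |∫ x, V x * Ψa x * Ψb x| ≤
      (∫⁻ x, (‖V x * Ψa x * Ψb x‖₊ : ℝ≥0∞)).toReal := by
    rw [← Real.norm_eq_abs]
    refine (norm_integral_le_integral_norm _).trans ?_
    change _ ≤ (∫⁻ x, ‖V x * Ψa x * Ψb x‖ₑ).toReal
    rw [← ofReal_integral_norm_eq_lintegral_enorm hInt, ENNReal.toReal_ofReal
      (integral_nonneg fun x => norm_nonneg _)]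
  refine habs.trans (ENNReal.toReal_le_of_le_ofReal
    (div_nonneg (by positivity) hD0.le) ?_)
  calc ∫⁻ x, (‖V x * Ψa x * Ψb x‖₊ : ℝ≥0∞)
      = (∫⁻ x in s, (‖V x * Ψa x * Ψb x‖₊ : ℝ≥0∞)) +
        (∫⁻ x in sᶜ, (‖V x * Ψa x * Ψb x‖₊ : ℝ≥0∞)) :=
        (lintegral_add_compl _ hsm).symm
    _ ≤ ENNReal.ofReal T1 + ENNReal.ofReal M := add_le_add hinner houter
    _ = ENNReal.ofReal (T1 + M) := (ENNReal.ofReal_add hT1nn hMnn).symm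
    _ ≤ ENNReal.ofReal ((K1 * ε ^ (-(2*ι)) + C₁ * (4*(d:ℝ)) ^ (2*ι)) /
        ((1 + Real.log wa) ^ ι * (1 + Real.log wb) ^ ι)) :=
        ENNReal.ofReal_le_ofReal hfinal
end

section
/- Let n ≥ 1 be an integer. There exists a constant C > 0 (depending only on n) such that: for every γ > 0 and every real K ≥ 1, there exists a closed subset D′ ⊆ [0,2π)^n with Lebesgue measure of [0,2π)^n ∖ D′ at most C·K^{n+1}·γ, such that for every ω ∈ D′, every k ∈ ℤ^n with 0 < |k| ≤ K, and every integer m, one has |k·ω − m| ≥ γ(1 + |m|). -/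
/-!
A point ω of the cube [0, L)ⁿ violates the Melnikov condition only if it lies in one of the
slabs |k·ω - m| < γ(1 + |m|) with 0 < |k| ≤ K. For γ ≤ 1/2 such a slab meets the cube only
when |m| < 2nL|k| + 1, and slicing it along a coordinate i with |kᵢ| = |k| (Fubini) shows
that its measure is at most 2γ(1 + |m|)/|kᵢ| · Lⁿ⁻¹ = O(γ), uniformly in k and m. There are
O(K^(n+1)) such pairs (k, m). To make the good set closed we intersect it with [0, L - γ]ⁿ,
which costs at most nγLⁿ⁻¹ more; for γ > 1/2 the empty set does the job.
-/

open MeasureTheory Set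
open scoped ENNReal

theorem volume_le_mul_of_fiber_le {N : ℕ} (i : Fin (N + 1)) {S : Set (Fin (N + 1) → ℝ)}
    (hS : MeasurableSet S) {T : Set (Fin N → ℝ)} (hT : MeasurableSet T)
    (hST : ∀ ω ∈ S, i.removeNth ω ∈ T) {c : ℝ≥0∞}
    (hc : ∀ y ∈ T, volume {x : ℝ | i.insertNth x y ∈ S} ≤ c) :
    volume S ≤ c * volume T := by
  let e := MeasurableEquiv.piFinSuccAbove (fun _ : Fin (N + 1) => ℝ) i
  have hfiber : ∀ y, volume {x : ℝ | i.insertNth x y ∈ S} ≤ T.indicator (fun _ => c) y := by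
    intro y
    by_cases hy : y ∈ T
    · simpa [hy] using hc y hy
    · have hempty : {x : ℝ | i.insertNth x y ∈ S} = ∅ :=
        eq_empty_of_forall_notMem fun x hx => hy (by simpa using hST _ hx)
      simp [hy, hempty]
  calc volume S = volume (e.symm ⁻¹' S) :=
        ((volume_preserving_piFinSuccAbove _ i).symm e).measure_preimage
          hS.nullMeasurableSet |>.symm
    _ = ∫⁻ y, volume {x : ℝ | i.insertNth x y ∈ S} := by
        rw [Measure.volume_eq_prod, Measure.prod_apply_symm (e.symm.measurable hS)]
        rfl
    _ ≤ ∫⁻ y, T.indicator (fun _ => c) y := lintegral_mono hfiber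
    _ = c * volume T := lintegral_indicator_const hT c

theorem volume_abs_mul_sub_lt {a : ℝ} (ha : a ≠ 0) (b ε : ℝ) :
    volume {x : ℝ | |a * x - b| < ε} = ENNReal.ofReal (2 * ε / |a|) := by
  have : {x : ℝ | |a * x - b| < ε} = (fun x => a * x) ⁻¹' Metric.ball b ε := by
    ext x; simp [Real.dist_eq]
  rw [this, Real.volume_preimage_mul_left ha, Real.volume_ball, abs_inv,
    ← ENNReal.ofReal_mul (by positivity), inv_mul_eq_div]

def cube (n : ℕ) (L : ℝ) : Set (Fin n → ℝ) :=
  univ.pi fun _ => Ico 0 L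

theorem measurableSet_cube (n : ℕ) (L : ℝ) : MeasurableSet (cube n L) :=
  MeasurableSet.univ_pi fun _ => measurableSet_Ico

theorem volume_cube (n : ℕ) {L : ℝ} (hL : 0 ≤ L) :
    volume (cube n L) = ENNReal.ofReal (L ^ n) := by
  simp [cube, volume_pi_pi, Real.volume_Ico, ENNReal.ofReal_pow hL]

theorem removeNth_mem_cube {N : ℕ} {L : ℝ} (i : Fin (N + 1)) {ω : Fin (N + 1) → ℝ}
    (hω : ω ∈ cube (N + 1) L) : i.removeNth ω ∈ cube N L :=
  fun _ _ => hω _ (mem_univ _)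

theorem measure_biUnion_le_card_mul {α ι : Type*} [MeasurableSpace α] {μ : Measure α}
    (s : Finset ι) (f : ι → Set α) {c : ℝ} (h : ∀ i ∈ s, μ (f i) ≤ ENNReal.ofReal c) :
    μ (⋃ i ∈ s, f i) ≤ ENNReal.ofReal (s.card * c) :=
  calc μ (⋃ i ∈ s, f i) ≤ ∑ i ∈ s, μ (f i) := measure_biUnion_finset_le s f
    _ ≤ s.card • ENNReal.ofReal c := Finset.sum_le_card_nsmul _ _ _ h
    _ = ENNReal.ofReal (s.card * c) := by
        rw [nsmul_eq_mul, ← ENNReal.ofReal_natCast, ← ENNReal.ofReal_mul (by positivity)]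

theorem volume_cube_inter_abs_sum_sub_lt_le {n : ℕ} {L : ℝ} (hL : 0 ≤ L) {k : Fin n → ℤ}
    {i : Fin n} (hki : k i ≠ 0) (b ε : ℝ) :
    volume (cube n L ∩ {ω | |∑ j, (k j : ℝ) * ω j - b| < ε}) ≤
      ENNReal.ofReal (2 * ε / |(k i : ℝ)| * L ^ (n - 1)) := by
  obtain ⟨N, rfl⟩ := Nat.exists_eq_add_one_of_ne_zero i.pos.ne'
  have hS : MeasurableSet (cube (N + 1) L ∩ {ω | |∑ j, (k j : ℝ) * ω j - b| < ε}) :=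
    (measurableSet_cube _ _).inter (measurableSet_lt (by fun_prop) measurable_const)
  refine (volume_le_mul_of_fiber_le i hS (measurableSet_cube N L)
    (fun ω hω => removeNth_mem_cube i hω.1) (c := ENNReal.ofReal (2 * ε / |(k i : ℝ)|))
    fun y _ => ?_).trans ?_
  · rw [← volume_abs_mul_sub_lt (Int.cast_ne_zero.2 hki)
      (b - ∑ j, (k (i.succAbove j) : ℝ) * y j)]
    refine measure_mono fun x hx => ?_
    have hx : |∑ j, (k j : ℝ) * Fin.insertNth (α := fun _ => ℝ) i x y j - b| < ε :=
      hx.2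
    simp only [Fin.sum_univ_succAbove _ i, Fin.insertNth_apply_same,
      Fin.insertNth_apply_succAbove] at hx
    show |(k i : ℝ) * x - (b - ∑ j, (k (i.succAbove j) : ℝ) * y j)| < ε
    convert hx using 2
    ring
  · rw [volume_cube N hL, ← ENNReal.ofReal_mul' (by positivity), Nat.add_sub_cancel]

theorem volume_cube_inter_sub_lt_apply_le {n : ℕ} {L : ℝ} (hL : 0 ≤ L) (i : Fin n) (γ : ℝ) :
    volume (cube n L ∩ {ω | L - γ < ω i}) ≤ ENNReal.ofReal (γ * L ^ (n - 1)) := by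
  obtain ⟨N, rfl⟩ := Nat.exists_eq_add_one_of_ne_zero i.pos.ne'
  have hS : MeasurableSet (cube (N + 1) L ∩ {ω | L - γ < ω i}) :=
    (measurableSet_cube _ _).inter (measurableSet_lt measurable_const (measurable_pi_apply i))
  refine (volume_le_mul_of_fiber_le i hS (measurableSet_cube N L)
    (fun ω hω => removeNth_mem_cube i hω.1) (c := volume (Ioo (L - γ) L)) fun y _ => ?_).trans ?_
  · refine measure_mono fun x hx => ?_
    have h1 := hx.1 i (mem_univ i)
    have h2 : L - γ < Fin.insertNth (α := fun _ => ℝ) i x y i := hx.2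
    simp only [Fin.insertNth_apply_same] at h1 h2
    exact ⟨h2, h1.2⟩
  · rw [volume_cube N hL, Real.volume_Ioo, ← ENNReal.ofReal_mul' (by positivity),
      sub_sub_cancel, Nat.add_sub_cancel]

theorem volume_cube_diff_pi_Icc_le (n : ℕ) {L : ℝ} (hL : 0 ≤ L) (γ : ℝ) :
    volume (cube n L \ univ.pi fun _ => Icc 0 (L - γ)) ≤
      ENNReal.ofReal (n * (γ * L ^ (n - 1))) := by
  have hcover : cube n L \ univ.pi (fun _ => Icc 0 (L - γ)) ⊆
      ⋃ i ∈ Finset.univ, cube n L ∩ {ω | L - γ < ω i} := by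
    rintro ω ⟨hω, hωIcc⟩
    obtain ⟨i, -, hi⟩ := not_forall₂.mp hωIcc
    have hωi := hω i (mem_univ i)
    exact mem_biUnion (Finset.mem_coe.2 (Finset.mem_univ i))
      ⟨hω, lt_of_not_ge fun h => hi ⟨hωi.1, h⟩⟩
  simpa using (measure_mono hcover).trans (measure_biUnion_le_card_mul Finset.univ _
    fun i _ => volume_cube_inter_sub_lt_apply_le hL i γ)

def resonantSet (γ : ℝ) {n : ℕ} (k : Fin n → ℤ) (m : ℤ) : Set (Fin n → ℝ) :=
  {ω | |∑ j, (k j : ℝ) * ω j - m| < γ * (1 + |(m : ℝ)|)}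

def nonresonantSet (n : ℕ) (γ K : ℝ) : Set (Fin n → ℝ) :=
  {ω | ∀ k : Fin n → ℤ, 0 < ‖k‖ → ‖k‖ ≤ K → ∀ m : ℤ,
    γ * (1 + |(m : ℝ)|) ≤ |∑ j, (k j : ℝ) * ω j - m|}

theorem isClosed_nonresonantSet (n : ℕ) (γ K : ℝ) : IsClosed (nonresonantSet n γ K) := by
  simp only [nonresonantSet, ofPred_forall]
  exact isClosed_iInter fun k => isClosed_iInter fun _ => isClosed_iInter fun _ =>
    isClosed_iInter fun m => isClosed_le continuous_const (by fun_prop)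

theorem abs_lt_two_mul_abs_add_one_of_abs_sub_lt {x y γ : ℝ} (hγ : γ ≤ 1 / 2)
    (h : |x - y| < γ * (1 + |y|)) : |y| < 2 * |x| + 1 := by
  have := abs_sub_abs_le_abs_sub y x
  rw [abs_sub_comm] at this
  nlinarith [mul_nonneg (sub_nonneg.2 hγ) (by positivity : (0 : ℝ) ≤ 1 + |y|)]

theorem abs_sum_mul_le_of_mem_cube {n : ℕ} {L B : ℝ} (hB : 0 ≤ B) {k : Fin n → ℤ}
    (hk : ∀ j, |(k j : ℝ)| ≤ B) {ω : Fin n → ℝ} (hω : ω ∈ cube n L) :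
    |∑ j, (k j : ℝ) * ω j| ≤ n * (B * L) :=
  calc |∑ j, (k j : ℝ) * ω j| ≤ ∑ j, |(k j : ℝ) * ω j| := Finset.abs_sum_le_sum_abs _ _
    _ ≤ ∑ _j : Fin n, B * L := Finset.sum_le_sum fun j _ => by
        have hωj := hω j (mem_univ j)
        rw [abs_mul, abs_of_nonneg hωj.1]
        exact mul_le_mul (hk j) hωj.2.le hωj.1 hB
    _ = n * (B * L) := by simp

theorem abs_lt_of_mem_cube_inter_resonantSet {n : ℕ} {L B γ : ℝ} (hB : 0 ≤ B)
    (hγ : γ ≤ 1 / 2) {k : Fin n → ℤ} (hk : ∀ j, |(k j : ℝ)| ≤ B) {m : ℤ} {ω : Fin n → ℝ}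
    (hω : ω ∈ cube n L ∩ resonantSet γ k m) : |(m : ℝ)| < 2 * (n * (B * L)) + 1 := by
  have := abs_lt_two_mul_abs_add_one_of_abs_sub_lt hγ hω.2
  linarith [abs_sum_mul_le_of_mem_cube hB hk hω.1]

theorem volume_cube_inter_resonantSet_le {n : ℕ} {L γ : ℝ} (hL : 0 ≤ L) (hγ₀ : 0 ≤ γ)
    (hγ : γ ≤ 1 / 2) {k : Fin n → ℤ} (hk : k ≠ 0) (m : ℤ) :
    volume (cube n L ∩ resonantSet γ k m) ≤
      ENNReal.ofReal (4 * (1 + n * L) * γ * L ^ (n - 1)) := by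
  obtain ⟨i, -, hi⟩ := Finset.exists_max_image Finset.univ (fun j => |(k j : ℝ)|)
    (Finset.univ_nonempty_iff.2 ⟨(Function.ne_iff.1 hk).choose⟩)
  have hki : k i ≠ 0 := fun h0 => hk (funext fun j => by
    simpa [h0] using hi j (Finset.mem_univ j))
  have hki1 : 1 ≤ |(k i : ℝ)| := by exact_mod_cast Int.one_le_abs hki
  rcases (cube n L ∩ resonantSet γ k m).eq_empty_or_nonempty with hempty | ⟨ω, hω⟩
  · simp [hempty]
  have hm := abs_lt_of_mem_cube_inter_resonantSet (by positivity) hγ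
    (fun j => hi j (Finset.mem_univ j)) hω
  refine (volume_cube_inter_abs_sum_sub_lt_le hL hki _ _).trans
    (ENNReal.ofReal_le_ofReal (mul_le_mul_of_nonneg_right ?_ (by positivity)))
  rw [div_le_iff₀ (by positivity)]
  nlinarith [mul_le_mul_of_nonneg_left hki1 (by positivity : (0 : ℝ) ≤ 1 + n * L)]

theorem mem_Icc_neg_floor_of_abs_le {z : ℤ} {x : ℝ} (h : |(z : ℝ)| ≤ x) :
    z ∈ Finset.Icc (-⌊x⌋) ⌊x⌋ := by
  have : |z| ≤ ⌊x⌋ := Int.le_floor.2 (by exact_mod_cast h)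
  exact Finset.mem_Icc.2 (abs_le.1 this)

theorem card_Icc_neg_floor_le {x : ℝ} (hx : 0 ≤ x) :
    ((Finset.Icc (-⌊x⌋) ⌊x⌋).card : ℝ) ≤ 2 * x + 1 := by
  have hfloor : (0 : ℤ) ≤ ⌊x⌋ := Int.floor_nonneg.2 hx
  rw [Int.card_Icc, show ⌊x⌋ + 1 - -⌊x⌋ = 2 * ⌊x⌋ + 1 by ring]
  have hcast : (((2 * ⌊x⌋ + 1).toNat : ℤ) : ℝ) = 2 * ⌊x⌋ + 1 := by
    rw [Int.toNat_of_nonneg (by omega)]; push_cast; ring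
  rw [← Int.cast_natCast, hcast]
  linarith [Int.floor_le x]

-- The range of `m` is the bound of `abs_lt_of_mem_cube_inter_resonantSet` with `B = K`.
noncomputable def resonanceIndices (n : ℕ) (L K : ℝ) : Finset ((Fin n → ℤ) × ℤ) :=
  ((Fintype.piFinset fun _ => Finset.Icc (-⌊K⌋) ⌊K⌋) ×ˢ
    Finset.Icc (-⌊2 * (n * (K * L)) + 1⌋) ⌊2 * (n * (K * L)) + 1⌋).filter (·.1 ≠ 0)

theorem card_resonanceIndices_le (n : ℕ) {L K : ℝ} (hL : 0 ≤ L) (hK : 0 ≤ K) :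
    ((resonanceIndices n L K).card : ℝ) ≤ (2 * K + 1) ^ n * (4 * n * K * L + 3) := by
  calc ((resonanceIndices n L K).card : ℝ)
      ≤ ((Finset.Icc (-⌊K⌋) ⌊K⌋).card : ℝ) ^ n *
          (Finset.Icc (-⌊2 * (n * (K * L)) + 1⌋) ⌊2 * (n * (K * L)) + 1⌋).card := by
        have hfilter := Finset.card_filter_le
          ((Fintype.piFinset fun _ : Fin n => Finset.Icc (-⌊K⌋) ⌊K⌋) ×ˢ
            Finset.Icc (-⌊2 * (n * (K * L)) + 1⌋) ⌊2 * (n * (K * L)) + 1⌋) (·.1 ≠ 0)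
        rw [Finset.card_product, Fintype.card_piFinset, Finset.prod_const, Finset.card_univ,
          Fintype.card_fin] at hfilter
        exact_mod_cast hfilter
    _ ≤ (2 * K + 1) ^ n * (2 * (2 * (n * (K * L)) + 1) + 1) := by
        gcongr
        · exact card_Icc_neg_floor_le hK
        · exact card_Icc_neg_floor_le (by positivity)
    _ = (2 * K + 1) ^ n * (4 * n * K * L + 3) := by ring

theorem cube_diff_nonresonantSet_subset (n : ℕ) {L γ K : ℝ} (hγ : γ ≤ 1 / 2) :
    cube n L \ nonresonantSet n γ K ⊆
      ⋃ p ∈ resonanceIndices n L K, cube n L ∩ resonantSet γ p.1 p.2 := by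
  rintro ω ⟨hω, hωres⟩
  simp only [nonresonantSet, mem_ofPred_eq, not_forall, not_le] at hωres
  obtain ⟨k, hk₀, hkK, m, hm⟩ := hωres
  have hkj : ∀ j, |(k j : ℝ)| ≤ K := fun j => by
    simpa [Int.cast_abs, Int.norm_eq_abs] using (norm_le_pi_norm k j).trans hkK
  have hmem : ω ∈ cube n L ∩ resonantSet γ k m := ⟨hω, hm⟩
  have hmK := abs_lt_of_mem_cube_inter_resonantSet (hk₀.trans_le hkK).le hγ hkj hmem
  refine mem_biUnion (x := (k, m)) ?_ hmem
  simp only [resonanceIndices, Finset.coe_filter, Finset.mem_product, Fintype.mem_piFinset]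
  exact ⟨⟨fun j => mem_Icc_neg_floor_of_abs_le (hkj j), mem_Icc_neg_floor_of_abs_le hmK.le⟩,
    norm_pos_iff.1 hk₀⟩

theorem volume_cube_diff_nonresonantSet_le (n : ℕ) {L γ K : ℝ} (hL : 0 ≤ L) (hγ₀ : 0 ≤ γ)
    (hγ : γ ≤ 1 / 2) (hK : 1 ≤ K) :
    volume (cube n L \ nonresonantSet n γ K) ≤
      ENNReal.ofReal (4 * 3 ^ n * (4 * n * L + 3) * (1 + n * L) * L ^ (n - 1) *
        K ^ (n + 1) * γ) := by
  refine (measure_mono (cube_diff_nonresonantSet_subset n hγ)).trans <|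
    (measure_biUnion_le_card_mul _ _ fun p hp => volume_cube_inter_resonantSet_le hL hγ₀ hγ
      (Finset.mem_filter.1 hp).2 p.2).trans (ENNReal.ofReal_le_ofReal ?_)
  have hcard : ((resonanceIndices n L K).card : ℝ) ≤ (3 * K) ^ n * ((4 * n * L + 3) * K) :=
    (card_resonanceIndices_le n hL (by linarith)).trans (by gcongr <;> nlinarith)
  calc ((resonanceIndices n L K).card : ℝ) * (4 * (1 + n * L) * γ * L ^ (n - 1))
      ≤ (3 * K) ^ n * ((4 * n * L + 3) * K) * (4 * (1 + n * L) * γ * L ^ (n - 1)) := by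
        gcongr
    _ = _ := by ring

theorem exists_isClosed_subset_cube_volume_diff_le (n : ℕ) {L : ℝ} (hL : 0 < L) :
    ∃ C > 0, ∀ γ : ℝ, 0 < γ → ∀ K : ℝ, 1 ≤ K →
      ∃ D : Set (Fin n → ℝ), IsClosed D ∧ D ⊆ cube n L ∧
        volume (cube n L \ D) ≤ ENNReal.ofReal (C * K ^ (n + 1) * γ) ∧
        D ⊆ nonresonantSet n γ K := by
  set c := 4 * 3 ^ n * (4 * n * L + 3) * (1 + n * L) * L ^ (n - 1)
  refine ⟨2 * L ^ n + n * L ^ (n - 1) + c, by positivity, fun γ hγ K hK => ?_⟩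
  have hKpow : 1 ≤ K ^ (n + 1) := one_le_pow₀ hK
  by_cases hγ2 : γ ≤ 1 / 2
  · refine ⟨(univ.pi fun _ => Icc 0 (L - γ)) ∩ nonresonantSet n γ K,
      (isClosed_set_pi fun _ _ => isClosed_Icc).inter (isClosed_nonresonantSet n γ K),
      fun ω hω i _ => ?_, ?_, inter_subset_right⟩
    · exact ⟨(hω.1 i (mem_univ i)).1, (hω.1 i (mem_univ i)).2.trans_lt (by linarith)⟩
    calc volume (cube n L \ ((univ.pi fun _ => Icc 0 (L - γ)) ∩ nonresonantSet n γ K))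
        ≤ volume (cube n L \ univ.pi fun _ => Icc 0 (L - γ)) +
            volume (cube n L \ nonresonantSet n γ K) := by
          rw [sdiff_inter]; exact measure_union_le _ _
      _ ≤ ENNReal.ofReal (n * (γ * L ^ (n - 1))) + ENNReal.ofReal (c * K ^ (n + 1) * γ) :=
          add_le_add (volume_cube_diff_pi_Icc_le n hL.le γ)
            (volume_cube_diff_nonresonantSet_le n hL.le hγ.le hγ2 hK)
      _ ≤ ENNReal.ofReal ((2 * L ^ n + n * L ^ (n - 1) + c) * K ^ (n + 1) * γ) := by
          rw [← ENNReal.ofReal_add (by positivity) (by positivity)]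
          refine ENNReal.ofReal_le_ofReal ?_
          nlinarith [mul_le_mul_of_nonneg_left hKpow
            (by positivity : (0 : ℝ) ≤ (2 * L ^ n + n * L ^ (n - 1)) * γ),
            (by positivity : (0 : ℝ) ≤ L ^ n * γ)]
  · refine ⟨∅, isClosed_empty, empty_subset _, ?_, empty_subset _⟩
    rw [sdiff_empty, volume_cube n hL.le]
    refine ENNReal.ofReal_le_ofReal ?_
    nlinarith [mul_le_mul_of_nonneg_left hKpow
      (by positivity : (0 : ℝ) ≤ (2 * L ^ n + n * L ^ (n - 1) + c) * γ),
      mul_le_mul_of_nonneg_left (by linarith : (1 : ℝ) ≤ 2 * γ) (by positivity : (0 : ℝ) ≤ L ^ n),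
      (by positivity : (0 : ℝ) ≤ (n * L ^ (n - 1) + c) * γ)]

theorem stmt4_general (n : ℕ) :
    ∃ C > 0, ∀ γ : ℝ, 0 < γ → ∀ K : ℝ, 1 ≤ K →
      ∃ D' : Set (Fin n → ℝ), IsClosed D' ∧
        D' ⊆ Set.univ.pi (fun _ => Set.Ico 0 (2 * Real.pi)) ∧
        volume (Set.univ.pi (fun _ => Set.Ico (0 : ℝ) (2 * Real.pi)) \ D') ≤
          ENNReal.ofReal (C * K ^ (n + 1) * γ) ∧
        ∀ ω ∈ D', ∀ k : Fin n → ℤ, 0 < ‖k‖ → ‖k‖ ≤ K → ∀ m : ℤ,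
          γ * (1 + |(m : ℝ)|) ≤ |(∑ i, (k i : ℝ) * ω i) - (m : ℝ)| :=
  exists_isClosed_subset_cube_volume_diff_le n Real.two_pi_pos

theorem stmt4 (n : ℕ) (hn : 1 ≤ n) :
    ∃ C > 0, ∀ γ : ℝ, 0 < γ → ∀ K : ℝ, 1 ≤ K →
      ∃ D' : Set (Fin n → ℝ), IsClosed D' ∧
        D' ⊆ Set.univ.pi (fun _ => Set.Ico 0 (2 * Real.pi)) ∧
        volume (Set.univ.pi (fun _ => Set.Ico (0 : ℝ) (2 * Real.pi)) \ D') ≤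
          ENNReal.ofReal (C * K ^ (n + 1) * γ) ∧
        ∀ ω ∈ D', ∀ k : Fin n → ℤ, 0 < ‖k‖ → ‖k‖ ≤ K → ∀ m : ℤ,
          γ * (1 + |(m : ℝ)|) ≤ |(∑ i, (k i : ℝ) * ω i) - (m : ℝ)| :=
  stmt4_general n
end

section
/- Fix an integer d ≥ 1 and let β > 1/2. There exists a constant C > 0 depending only on β such that for every b ∈ Ê, Σ_{c∈Ê} 1/((1 + ln c)^{2β} (1 + |b − c|)) ≤ C. -/
/-!
Put `s = 2β > 1` and `φ(x) = 1 / ((1 + x) (1 + log (1 + x)) ^ s)`. Writing `b = d + 2 k_b` and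
`c = d + 2 k`, we have `c ≥ 1 + k` and `|b - c| ≥ |k - k_b|`, so the summand is at most
`φ (min k |k - k_b|) ≤ φ k + φ |k - k_b|`. The series `∑ φ n` converges by Cauchy condensation
(the condensed series is dominated by `∑ (n + 1) ^ (-s)`), hence the sum is bounded by
`∑ₙ φ n + ∑_{z ∈ ℤ} φ |z|`, uniformly in `b`.
-/

open Real Function Set

noncomputable def bertrandWeight (s x : ℝ) : ℝ := ((1 + x) * (1 + log (1 + x)) ^ s)⁻¹

lemma one_add_log_one_add_pos {x : ℝ} (hx : 0 ≤ x) : 0 < 1 + log (1 + x) := by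
  linarith [log_nonneg (by linarith : (1 : ℝ) ≤ 1 + x)]

lemma bertrandWeight_nonneg (s : ℝ) {x : ℝ} (hx : 0 ≤ x) : 0 ≤ bertrandWeight s x := by
  have := rpow_pos_of_pos (one_add_log_one_add_pos hx) s
  unfold bertrandWeight
  positivity

lemma bertrandWeight_antitoneOn {s : ℝ} (hs : 0 ≤ s) : AntitoneOn (bertrandWeight s) (Ici 0) := by
  intro x (hx : 0 ≤ x) y _ hxy
  have := rpow_pos_of_pos (one_add_log_one_add_pos hx) s
  have := one_add_log_one_add_pos hx
  unfold bertrandWeight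
  gcongr; all_goals linarith

lemma one_div_one_add_log_rpow_mul_nonneg (s : ℝ) {x y : ℝ} (hx : 1 ≤ x) (hy : 0 ≤ y) :
    0 ≤ 1 / ((1 + log x) ^ s * (1 + y)) := by
  have := rpow_nonneg (by linarith [log_nonneg hx] : 0 ≤ 1 + log x) s
  positivity

lemma one_div_one_add_log_rpow_mul_le_bertrandWeight_add {s a b x y : ℝ} (hs : 0 ≤ s)
    (ha : 0 ≤ a) (hb : 0 ≤ b) (hx : 1 + a ≤ x) (hy : b ≤ y) :
    1 / ((1 + log x) ^ s * (1 + y)) ≤ bertrandWeight s a + bertrandWeight s b := by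
  have hLa := one_add_log_one_add_pos ha
  have hLb := one_add_log_one_add_pos hb
  have hlog : 1 + log (1 + a) ≤ 1 + log x := by gcongr
  have := rpow_pos_of_pos hLa s
  have := rpow_pos_of_pos hLb s
  have := rpow_pos_of_pos (hLa.trans_le hlog) s
  rw [one_div]
  rcases le_total a b with hab | hba
  · have : ((1 + log x) ^ s * (1 + y))⁻¹ ≤ bertrandWeight s a := by
      rw [bertrandWeight, mul_comm (1 + a)]
      gcongr
      linarith
    linarith [bertrandWeight_nonneg s hb]
  · have : ((1 + log x) ^ s * (1 + y))⁻¹ ≤ bertrandWeight s b := by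
      rw [bertrandWeight, mul_comm (1 + b)]
      gcongr
      linarith
    linarith [bertrandWeight_nonneg s ha]

lemma two_pow_mul_bertrandWeight_two_pow_le {s : ℝ} (hs : 0 ≤ s) (n : ℕ) :
    2 ^ n * bertrandWeight s (2 ^ n) ≤ (log 2) ^ (-s) * ((n + 1 : ℝ) ^ s)⁻¹ := by
  have hlog2 : 0 < log 2 := log_pos one_lt_two
  have hlog_le : log 2 * (n + 1) ≤ 1 + log (1 + 2 ^ n) := by
    have h1 : log ((2 : ℝ) ^ n) ≤ log (1 + 2 ^ n) := log_le_log (by positivity) (by linarith)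
    have h2 : log 2 ≤ 1 := by linarith [log_le_sub_one_of_pos (x := 2) two_pos]
    rw [log_pow] at h1
    nlinarith
  calc 2 ^ n * bertrandWeight s (2 ^ n) ≤ ((1 + log (1 + 2 ^ n)) ^ s)⁻¹ := by
        have := rpow_pos_of_pos (one_add_log_one_add_pos (x := 2 ^ n) (by positivity)) s
        rw [bertrandWeight, mul_inv, ← mul_assoc]
        refine mul_le_of_le_one_left (by positivity) ?_
        rw [← div_eq_mul_inv, div_le_one (by positivity)]
        linarith
    _ ≤ ((log 2 * (n + 1)) ^ s)⁻¹ := by gcongr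
    _ = (log 2) ^ (-s) * ((n + 1 : ℝ) ^ s)⁻¹ := by
        rw [mul_rpow hlog2.le (by positivity), rpow_neg hlog2.le, mul_inv]

lemma summable_bertrandWeight {s : ℝ} (hs : 1 < s) :
    Summable fun n : ℕ => bertrandWeight s n := by
  have hs0 : 0 ≤ s := by linarith
  rw [← summable_condensed_iff_of_nonneg (fun n => bertrandWeight_nonneg s n.cast_nonneg)
    (fun m n _ hmn => bertrandWeight_antitoneOn hs0 (mem_Ici.2 m.cast_nonneg)
      (mem_Ici.2 n.cast_nonneg) (by exact_mod_cast hmn))]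
  have hp : Summable fun n : ℕ => ((n + 1 : ℝ) ^ s)⁻¹ := by
    exact_mod_cast (summable_nat_add_iff 1).2 (summable_nat_rpow_inv.2 hs)
  refine (hp.mul_left (log 2 ^ (-s))).of_nonneg_of_le (fun n => ?_) fun n => ?_
  · exact mul_nonneg (by positivity) (bertrandWeight_nonneg s (by positivity))
  · exact_mod_cast two_pow_mul_bertrandWeight_two_pow_le hs0 n

lemma summable_int_bertrandWeight_abs {s : ℝ} (hs : 1 < s) :
    Summable fun z : ℤ => bertrandWeight s |(z : ℝ)| := by
  refine .of_nat_of_neg_add_one ?_ ?_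
  · simpa using summable_bertrandWeight hs
  · refine ((summable_nat_add_iff 1).2 (summable_bertrandWeight hs)).congr fun n => ?_
    push_cast
    rw [abs_neg, abs_of_nonneg (by positivity)]

lemma one_div_one_add_log_rpow_mul_abs_sub_le {s : ℝ} (hs : 0 ≤ s) {d : ℕ} (hd : 1 ≤ d)
    (kb k : ℕ) :
    1 / ((1 + log ((d : ℝ) + 2 * k)) ^ s * (1 + |((d : ℝ) + 2 * kb) - ((d : ℝ) + 2 * k)|)) ≤
      bertrandWeight s k + bertrandWeight s |(((k : ℤ) - kb : ℤ) : ℝ)| := by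
  have hd' : (1 : ℝ) ≤ d := by exact_mod_cast hd
  refine one_div_one_add_log_rpow_mul_le_bertrandWeight_add hs k.cast_nonneg (abs_nonneg _)
    (by linarith [k.cast_nonneg (α := ℝ)]) ?_
  rw [show ((d : ℝ) + 2 * kb) - (d + 2 * k) = 2 * (kb - k) by ring, abs_mul, abs_two,
    abs_sub_comm]
  push_cast
  linarith [abs_nonneg ((k : ℝ) - kb)]

theorem stmt10 (d : ℕ) (hd : 1 ≤ d) (β : ℝ) (hβ : 1 / 2 < β) :
    ∃ C > 0, ∀ kb : ℕ,
      Summable (fun k : ℕ =>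
        1 / ((1 + Real.log ((d : ℝ) + 2 * k)) ^ (2 * β) *
          (1 + |((d : ℝ) + 2 * kb) - ((d : ℝ) + 2 * k)|))) ∧
      ∑' k : ℕ, 1 / ((1 + Real.log ((d : ℝ) + 2 * k)) ^ (2 * β) *
          (1 + |((d : ℝ) + 2 * kb) - ((d : ℝ) + 2 * k)|)) ≤ C := by
  have hs : 1 < 2 * β := by linarith
  have hφ := summable_bertrandWeight hs
  have hψ := summable_int_bertrandWeight_abs hs
  have hψ_nonneg (z : ℤ) := bertrandWeight_nonneg (2 * β) (abs_nonneg (z : ℝ))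
  refine ⟨∑' n : ℕ, bertrandWeight (2 * β) n + ∑' z : ℤ, bertrandWeight (2 * β) |(z : ℝ)|, ?_,
    fun kb => ?_⟩
  · have : 0 < ∑' n : ℕ, bertrandWeight (2 * β) n :=
      hφ.tsum_pos (fun n => bertrandWeight_nonneg _ n.cast_nonneg) 0 (by simp [bertrandWeight])
    linarith [(tsum_nonneg hψ_nonneg : 0 ≤ ∑' z : ℤ, bertrandWeight (2 * β) |(z : ℝ)|)]
  have hshift : Injective fun k : ℕ => (k : ℤ) - kb := fun _ _ h => by simpa using h
  have hψshift : Summable fun k : ℕ => bertrandWeight (2 * β) |(((k : ℤ) - kb : ℤ) : ℝ)| :=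
    hψ.comp_injective hshift
  have hbound := one_div_one_add_log_rpow_mul_abs_sub_le (s := 2 * β) (by linarith) hd kb
  have hmaj := hφ.add hψshift
  have hsum := hmaj.of_nonneg_of_le (fun k => one_div_one_add_log_rpow_mul_nonneg _
    (by linarith [k.cast_nonneg (α := ℝ), (Nat.one_le_cast (α := ℝ)).2 hd]) (abs_nonneg _)) hbound
  refine ⟨hsum, (hsum.tsum_le_tsum hbound hmaj).trans ?_⟩
  rw [hφ.tsum_add hψshift]
  gcongr
  exact tsum_comp_le_tsum_of_inj hψ hψ_nonneg hshift
end
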